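/- Let n > 1 be an integer, F and G division rings, and φ : F → Mₙ(G) a tight ring embedding. Let ν : G → F be the induced embedding (ν(g) is the unique element of F whose image under φ has first row (g, 0, …, 0)) and let f_0 = 1, f_1, …, f_{n−1} ∈ F be the elements whose images under φ have as first rows the standard basis rows, so that {f_0, …, f_{n−1}} is a left ν(G)-basis of F. Then, with L_k, S_k, D_k defined with respect to the subring ν(G) and this basis, for every 0 ≤ k < n−1 there exists e ∈ D_k with e ∉ S_k such that every d ∈ D_k can be written d = s + e·t with s, t ∈ S_k (i.e., {1, e} is a basis of D_k as a right S_k-vector space, so D_k has right dimension 2 over S_k). -/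

import Mathlib

/-- `φ : F → Mₙ(α)` is `a`-tight: every possible upper-right `a × (n+1-a)` block
(rows `1,…,a`, columns `a,…,n`, one-indexed) is realized by some element of `F`. -/
def ATight {n : ℕ} {F α : Type*} (φ : F → Matrix (Fin n) (Fin n) α) (a : ℕ) : Prop :=
  ∀ g : Matrix (Fin n) (Fin n) α, ∃ x : F, ∀ i j : Fin n,
    (i : ℕ) < a → a ≤ (j : ℕ) + 1 → φ x i j = g i j

/-- `L_k`: the left `ν(G)`-subspace of `F` spanned by `f_0, …, f_k`. -/
def LsetR {F G : Type*} [DivisionRing F] [DivisionRing G] (ν : G → F) (f : ℕ → F)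
    (k : ℕ) : Set F :=
  {x | ∃ c : ℕ → G, x = ∑ i ∈ Finset.range (k + 1), ν (c i) * f i}

/-- `S_k = {a ∈ F : L_k · a ⊆ L_k}`. -/
def SsetR {F G : Type*} [DivisionRing F] [DivisionRing G] (ν : G → F) (f : ℕ → F)
    (k : ℕ) : Set F :=
  {a | ∀ x ∈ LsetR ν f k, x * a ∈ LsetR ν f k}

/-- `D_0 = F`, and `D_k = {a ∈ F : L_{k-1} · a ⊆ L_k}` for `k ≥ 1`. -/
def DsetR {F G : Type*} [DivisionRing F] [DivisionRing G] (ν : G → F) (f : ℕ → F) :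
    ℕ → Set F
  | 0 => Set.univ
  | k + 1 => {a | ∀ x ∈ LsetR ν f k, x * a ∈ LsetR ν f (k + 1)}

/-!
Reading off first rows, `x ∈ L_m` iff the first row of `φ x` vanishes beyond column `m`; since
the first row of `φ (f_i * a)` is row `i` of `φ a`, this gives `L_{m₁} * a ⊆ L_{m₂}` iff `φ a`
vanishes in rows `≤ m₁` and columns `> m₂`. Thus `S_k` and `D_k` are cut out by vanishing blocks
of `φ`. Tightness yields `e` whose block in rows `≤ k`, columns `≥ k` is the matrix unit
`E_{k,k+1}`, so `e ∈ D_k \ S_k`; for `d ∈ D_k` it yields `t ∈ S_k` whose row `k + 1` is row `k`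
of `φ d`, and then `d - e * t ∈ S_k`.
-/

open Finset

namespace TightEmbedding

variable {F G : Type*} [DivisionRing F] [DivisionRing G] {n : ℕ} (hn : 0 < n)
  {φ : F →+* Matrix (Fin n) (Fin n) G} {ν : G → F} {f : ℕ → F}

theorem map_mul_apply_zero_of_nu
    (hν : ∀ (g : G) (j : Fin n), φ (ν g) ⟨0, hn⟩ j = if (j : ℕ) = 0 then g else 0)
    (g : G) (x : F) (j : Fin n) : φ (ν g * x) ⟨0, hn⟩ j = g * φ x ⟨0, hn⟩ j := by
  rw [map_mul, Matrix.mul_apply, sum_eq_single ⟨0, hn⟩]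
  · simp [hν]
  · intro l _ hl
    rw [hν, if_neg fun h => hl (Fin.ext h), zero_mul]
  · simp

theorem map_mul_apply_zero_of_basis
    (hf : ∀ i j : Fin n, φ (f (i : ℕ)) ⟨0, hn⟩ j = if (j : ℕ) = (i : ℕ) then 1 else 0)
    (i : Fin n) (a : F) (j : Fin n) : φ (f i * a) ⟨0, hn⟩ j = φ a i j := by
  rw [map_mul, Matrix.mul_apply, sum_eq_single i]
  · simp [hf]
  · intro l _ hl
    rw [hf, if_neg fun h => hl (Fin.ext h), zero_mul]
  · simp

theorem map_sum_apply_zero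
    (hν : ∀ (g : G) (j : Fin n), φ (ν g) ⟨0, hn⟩ j = if (j : ℕ) = 0 then g else 0)
    (hf : ∀ i j : Fin n, φ (f (i : ℕ)) ⟨0, hn⟩ j = if (j : ℕ) = (i : ℕ) then 1 else 0)
    (c : ℕ → G) {m : ℕ} (hm : m ≤ n) (j : Fin n) :
    φ (∑ i ∈ range m, ν (c i) * f i) ⟨0, hn⟩ j = if (j : ℕ) < m then c j else 0 := by
  have hterm : ∀ i ∈ range m, φ (ν (c i) * f i) ⟨0, hn⟩ j = if (j : ℕ) = i then c i else 0 := by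
    intro i hi
    have hin : i < n := (mem_range.1 hi).trans_le hm
    rw [map_mul_apply_zero_of_nu hn hν, hf ⟨i, hin⟩ j]
    split_ifs <;> simp_all
  rw [map_sum, Matrix.sum_apply, sum_congr rfl hterm, sum_ite_eq]
  simp

structure IsFirstRowBasis (φ : F →+* Matrix (Fin n) (Fin n) G) (ν : G → F) (f : ℕ → F) :
    Prop where
  map_nu_apply_zero : ∀ (g : G) (j : Fin n), φ (ν g) ⟨0, hn⟩ j = if (j : ℕ) = 0 then g else 0
  map_basis_apply_zero : ∀ i j : Fin n,
    φ (f (i : ℕ)) ⟨0, hn⟩ j = if (j : ℕ) = (i : ℕ) then 1 else 0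
  span : ∀ x : F, ∃ c : ℕ → G, x = ∑ i ∈ range n, ν (c i) * f i

theorem eq_of_map_apply_zero_eq (hB : IsFirstRowBasis hn φ ν f)
    {x y : F} (h : ∀ j : Fin n, φ x ⟨0, hn⟩ j = φ y ⟨0, hn⟩ j) : x = y := by
  have hrow := map_sum_apply_zero hn hB.map_nu_apply_zero hB.map_basis_apply_zero
  obtain ⟨a, rfl⟩ := hB.span x
  obtain ⟨b, rfl⟩ := hB.span y
  refine sum_congr rfl fun i hi => ?_
  have hi : i < n := mem_range.1 hi
  have hab := h ⟨i, hi⟩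
  simp only [hrow _ le_rfl, if_pos hi] at hab
  rw [hab]

theorem mem_LsetR_iff (hB : IsFirstRowBasis hn φ ν f)
    {m : ℕ} (hm : m < n) (x : F) :
    x ∈ LsetR ν f m ↔ ∀ j : Fin n, m < j → φ x ⟨0, hn⟩ j = 0 := by
  have hrow := map_sum_apply_zero hn hB.map_nu_apply_zero hB.map_basis_apply_zero
  constructor
  · rintro ⟨c, rfl⟩ j hj
    rw [hrow c hm j, if_neg (by omega)]
  · intro h
    obtain ⟨c, hc⟩ := hB.span x
    refine ⟨c, eq_of_map_apply_zero_eq hn hB fun j => ?_⟩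
    rw [hrow c hm j]
    split_ifs with hj
    · simpa [← hc] using hrow c le_rfl j
    · exact h j (by omega)

theorem mul_mem_LsetR_iff (hB : IsFirstRowBasis hn φ ν f)
    {m₁ m₂ : ℕ} (hm₁ : m₁ < n) (hm₂ : m₂ < n) (a : F) :
    (∀ x ∈ LsetR ν f m₁, x * a ∈ LsetR ν f m₂) ↔
      ∀ i j : Fin n, (i : ℕ) ≤ m₁ → m₂ < j → φ a i j = 0 := by
  simp only [mem_LsetR_iff hn hB hm₁, mem_LsetR_iff hn hB hm₂]
  constructor
  · intro h i j hi hj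
    rw [← map_mul_apply_zero_of_basis hn hB.map_basis_apply_zero]
    exact h _ (fun l hl => by rw [hB.map_basis_apply_zero, if_neg (by omega)]) j hj
  · intro h x hx j hj
    rw [map_mul, Matrix.mul_apply]
    refine sum_eq_zero fun l _ => ?_
    rcases le_or_gt (l : ℕ) m₁ with hl | hl
    · rw [h l j hl hj, mul_zero]
    · rw [hx l hl, zero_mul]

theorem mem_SsetR_iff (hB : IsFirstRowBasis hn φ ν f)
    {k : ℕ} (hk : k < n) (a : F) :
    a ∈ SsetR ν f k ↔ ∀ i j : Fin n, (i : ℕ) ≤ k → k < j → φ a i j = 0 :=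
  mul_mem_LsetR_iff hn hB hk hk a

theorem mem_DsetR_iff (hB : IsFirstRowBasis hn φ ν f)
    {k : ℕ} (hk : k < n) (a : F) :
    a ∈ DsetR ν f k ↔ ∀ i j : Fin n, (i : ℕ) < k → k < j → φ a i j = 0 := by
  cases k with
  | zero => simp [DsetR]
  | succ k =>
    simp only [Nat.lt_succ_iff]
    exact mul_mem_LsetR_iff hn hB (by omega) hk a

theorem unitBlock_mul_apply {R : Type*} [Semiring R] {k : ℕ} (hk : k + 1 < n)
    {E T : Matrix (Fin n) (Fin n) R}
    (hE : ∀ i l : Fin n, (i : ℕ) ≤ k → k ≤ l →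
      E i l = if (i : ℕ) = k ∧ (l : ℕ) = k + 1 then 1 else 0)
    (hT : ∀ l j : Fin n, (l : ℕ) ≤ k → k < j → T l j = 0)
    {i j : Fin n} (hi : (i : ℕ) ≤ k) (hj : k < (j : ℕ)) :
    (E * T) i j = if (i : ℕ) = k then T ⟨k + 1, hk⟩ j else 0 := by
  rw [Matrix.mul_apply, sum_eq_single ⟨k + 1, hk⟩]
  · rw [hE i _ hi (by simp)]
    split_ifs <;> simp_all
  · intro l _ hl
    rcases le_or_gt (l : ℕ) k with hlk | hlk
    · rw [hT l j hlk hj, mul_zero]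
    · rw [hE i l hi hlk.le, if_neg fun h => hl (Fin.ext h.2), zero_mul]
  · simp

theorem exists_eq_add_mul (hB : IsFirstRowBasis hn φ ν f)
    {k : ℕ} (hk : k + 1 < n) (htight : ATight (⇑φ) (k + 2)) {e : F}
    (he : ∀ i j : Fin n, (i : ℕ) ≤ k → k ≤ j →
      φ e i j = if (i : ℕ) = k ∧ (j : ℕ) = k + 1 then 1 else 0)
    {d : F} (hd : d ∈ DsetR ν f k) :
    ∃ s ∈ SsetR ν f k, ∃ t ∈ SsetR ν f k, d = s + e * t := by
  rw [mem_DsetR_iff hn hB (by omega)] at hd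
  -- `t` carries row `k` of `φ d` one row down, so that `e * t` reproduces it
  obtain ⟨t, ht⟩ :=
    htight (Matrix.of fun i j => if (i : ℕ) = k + 1 then φ d ⟨k, by omega⟩ j else 0)
  have ht' : ∀ i j : Fin n, (i : ℕ) ≤ k + 1 → k + 1 ≤ j →
      φ t i j = if (i : ℕ) = k + 1 then φ d ⟨k, by omega⟩ j else 0 :=
    fun i j hi hj => ht i j (by omega) (by omega)
  have htS : t ∈ SsetR ν f k := (mem_SsetR_iff hn hB (by omega) t).2
    fun i j hi hj => by rw [ht' i j (by omega) hj, if_neg (by omega)]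
  refine ⟨d - e * t, (mem_SsetR_iff hn hB (by omega) _).2 fun i j hi hj => ?_,
    t, htS, by abel⟩
  rw [map_sub, Matrix.sub_apply, map_mul,
    unitBlock_mul_apply hk he ((mem_SsetR_iff hn hB (by omega) t).1 htS) hi hj,
    ht' _ _ le_rfl hj]
  rcases hi.lt_or_eq with hi | rfl
  · rw [if_neg hi.ne, hd i j hi hj, sub_zero]
  · simp

end TightEmbedding

open TightEmbedding

theorem stmt2 {F G : Type*} [DivisionRing F] [DivisionRing G] (n : ℕ) (hn : 1 < n)
    (φ : F →+* Matrix (Fin n) (Fin n) G)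
    (htight : ∀ a : ℕ, 1 ≤ a → a ≤ n → ATight (⇑φ) a)
    -- `ν` is the induced embedding: `ν g` is the element whose image has first row `(g,0,…,0)`
    (ν : G → F)
    (hν : ∀ (g : G) (j : Fin n),
      φ (ν g) ⟨0, by omega⟩ j = if (j : ℕ) = 0 then g else 0)
    -- the elements `f_0 = 1, f_1, …, f_{n-1}` whose images have the standard basis first rows
    (f : ℕ → F)
    (hf : ∀ i j : Fin n,
      φ (f (i : ℕ)) ⟨0, by omega⟩ j = if (j : ℕ) = (i : ℕ) then 1 else 0)
    -- so that `{f_0, …, f_{n-1}}` is a left `ν(G)`-basis of `F`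
    (hspan : ∀ x : F, ∃ c : ℕ → G, x = ∑ i ∈ Finset.range n, ν (c i) * f i) :
    ∀ k < n - 1, ∃ e ∈ DsetR ν f k, e ∉ SsetR ν f k ∧
      ∀ d ∈ DsetR ν f k, ∃ s ∈ SsetR ν f k, ∃ t ∈ SsetR ν f k, d = s + e * t := by
  have hn₀ : 0 < n := by omega
  have hB : IsFirstRowBasis hn₀ φ ν f := ⟨hν, hf, hspan⟩
  intro k hk
  obtain ⟨e, he⟩ := htight (k + 1) (by omega) (by omega)
    (Matrix.of fun i j => if (i : ℕ) = k ∧ (j : ℕ) = k + 1 then 1 else 0)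
  have he' : ∀ i j : Fin n, (i : ℕ) ≤ k → k ≤ j →
      φ e i j = if (i : ℕ) = k ∧ (j : ℕ) = k + 1 then 1 else 0 :=
    fun i j hi hj => he i j (by omega) (by omega)
  refine ⟨e, (mem_DsetR_iff hn₀ hB (by omega) e).2 fun i j hi hj => ?_, fun heS => ?_,
    fun d hd => exists_eq_add_mul hn₀ hB (by omega) (htight _ (by omega) (by omega))
      he' hd⟩
  · rw [he' i j hi.le hj.le, if_neg (by omega)]
  · have hek := (mem_SsetR_iff hn₀ hB (by omega) e).1 heS
      ⟨k, by omega⟩ ⟨k + 1, by omega⟩ le_rfl (Nat.lt_succ_self k)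
    simp [he'] at hek
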